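/- Let K be an algebraically closed field and let f ∈ K[x_1,…,x_n] be a non-constant polynomial whose total degree p is a prime number. Suppose f is decomposable over K, i.e., f = g(h) for some univariate g ∈ K[z] with deg g ≥ 2 and some h ∈ K[x_1,…,x_n]. Then there exist a univariate polynomial α ∈ K[z] of degree p and a polynomial β ∈ K[x_1,…,x_n] of total degree 1 with f = α(β). Consequently, letting t be a new variable and Ω an algebraic closure of K(t), the polynomial f − t factors in Ω[x_1,…,x_n] as c·ℓ_1⋯ℓ_p for some nonzero c ∈ Ω and polynomials ℓ_1,…,ℓ_p ∈ Ω[x_1,…,x_n] each of total degree 1. -/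

import Mathlib

open MvPolynomial

/-- A polynomial `f ∈ K[x₁,…,xₙ]` is *decomposable* over `K` if `f = g(h)` for some
univariate `g ∈ K[z]` with `deg g ≥ 2` and some `h ∈ K[x₁,…,xₙ]`. -/
def MvPolynomial.Decomposable {K : Type*} [CommSemiring K] {n : ℕ}
    (f : MvPolynomial (Fin n) K) : Prop :=
  ∃ (g : Polynomial K) (h : MvPolynomial (Fin n) K),
    2 ≤ g.natDegree ∧ f = Polynomial.aeval h g

/-!
Substitution multiplies degrees: over a domain, `totalDegree (g(h)) = deg g · totalDegree h`,
since the top term `lc(g) · h ^ deg g` has exactly that degree and the remaining terms have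
smaller degree. As `p` is prime and `deg g ≥ 2`, this forces `deg g = p` and
`totalDegree h = 1`. Over the algebraically closed field `Ω`, the degree-`p` polynomial
`g - t` is `c · ∏ (z - rᵢ)`, and substituting `h` gives `f - t = c · ∏ (h - rᵢ)`.
-/

theorem Multiset.exists_prod_map_eq_prod_fin {ι M : Type*} [CommMonoid M] (s : Multiset ι)
    {p : ℕ} (hs : s.card = p) (f : ι → M) :
    ∃ r : Fin p → ι, (s.map f).prod = ∏ i, f (r i) := by
  induction s using Quot.induction_on with
  | h l =>
    subst hs
    exact ⟨fun i => l[i.1], (Fin.prod_univ_fun_getElem l f).symm⟩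

namespace MvPolynomial

variable {σ R : Type*}

theorem totalDegree_map_of_injective [CommSemiring R] {S : Type*} [CommSemiring S]
    {φ : R →+* S} (hφ : Function.Injective φ) (h : MvPolynomial σ R) :
    (map φ h).totalDegree = h.totalDegree := by
  rw [totalDegree, totalDegree, support_map_of_injective h hφ]

theorem totalDegree_sub_C_of_pos [CommRing R] {h : MvPolynomial σ R} (hh : 0 < h.totalDegree)
    (a : R) : (h - C a).totalDegree = h.totalDegree := by
  rw [sub_eq_add_neg, ← C_neg]
  exact totalDegree_add_eq_left_of_totalDegree_lt (by rwa [totalDegree_C])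

theorem totalDegree_pow_of_isDomain [CommRing R] [IsDomain R] (h : MvPolynomial σ R) (d : ℕ) :
    (h ^ d).totalDegree = d * h.totalDegree := by
  rcases eq_or_ne h 0 with rfl | h0
  · cases d <;> simp
  induction d with
  | zero => simp
  | succ d ih =>
    rw [pow_succ, totalDegree_mul_of_isDomain (pow_ne_zero _ h0) h0, ih, Nat.succ_mul]

theorem totalDegree_aeval_le [CommSemiring R] (g : Polynomial R) (h : MvPolynomial σ R) :
    (Polynomial.aeval h g).totalDegree ≤ g.natDegree * h.totalDegree := by
  rw [Polynomial.aeval_eq_sum_range]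
  refine (totalDegree_finsetSum _ _).trans (Finset.sup_le fun i hi => ?_)
  calc (g.coeff i • h ^ i).totalDegree ≤ (h ^ i).totalDegree := totalDegree_smul_le _ _
    _ ≤ i * h.totalDegree := totalDegree_pow _ _
    _ ≤ g.natDegree * h.totalDegree :=
      Nat.mul_le_mul_right _ (Nat.lt_succ_iff.1 (Finset.mem_range.1 hi))

theorem totalDegree_aeval [CommRing R] [IsDomain R] (g : Polynomial R) (h : MvPolynomial σ R) :
    (Polynomial.aeval h g).totalDegree = g.natDegree * h.totalDegree := by
  refine le_antisymm (totalDegree_aeval_le g h) ?_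
  rcases Nat.eq_zero_or_pos (g.natDegree * h.totalDegree) with h0 | hpos
  · simp [h0]
  obtain ⟨hd, he⟩ := CanonicallyOrderedAdd.mul_pos.1 hpos
  have hg : g.leadingCoeff ≠ 0 := by
    rw [Ne, Polynomial.leadingCoeff_eq_zero]; rintro rfl; simp at hd
  have hh : h ≠ 0 := by rintro rfl; simp at he
  have hlead : (C g.leadingCoeff * h ^ g.natDegree).totalDegree = g.natDegree * h.totalDegree := by
    rw [totalDegree_mul_of_isDomain (C_ne_zero.2 hg) (pow_ne_zero _ hh), totalDegree_C,
      totalDegree_pow_of_isDomain, zero_add]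
  have htail : (Polynomial.aeval h g.eraseLead).totalDegree < g.natDegree * h.totalDegree :=
    calc _ ≤ g.eraseLead.natDegree * h.totalDegree := totalDegree_aeval_le _ _
      _ ≤ (g.natDegree - 1) * h.totalDegree := Nat.mul_le_mul_right _ g.eraseLead_natDegree_le
      _ < g.natDegree * h.totalDegree := Nat.mul_lt_mul_of_pos_right (Nat.sub_lt hd one_pos) he
  conv_rhs => rw [← g.eraseLead_add_C_mul_X_pow]
  rw [map_add, map_mul, map_pow, Polynomial.aeval_C, Polynomial.aeval_X, algebraMap_eq,
    totalDegree_add_eq_right_of_totalDegree_lt (hlead ▸ htail), hlead]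

end MvPolynomial

theorem Polynomial.Splits.aeval_eq_leadingCoeff_mul_prod_roots {K A : Type*} [CommRing K]
    [IsDomain K] [CommRing A] [Algebra K A] {P : Polynomial K} (hP : P.Splits) (x : A) :
    aeval x P =
      algebraMap K A P.leadingCoeff * (P.roots.map fun r => x - algebraMap K A r).prod := by
  conv_lhs => rw [hP.eq_prod_roots]
  simp [map_multiset_prod, Multiset.map_map]

theorem MvPolynomial.exists_aeval_eq_C_mul_prod_of_totalDegree_eq_one {σ K : Type*} [Field K]
    [IsAlgClosed K] {P : Polynomial K} (hP : P ≠ 0) {p : ℕ} (hPp : P.natDegree = p)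
    {H : MvPolynomial σ K} (hH : H.totalDegree = 1) :
    ∃ (c : K) (ℓ : Fin p → MvPolynomial σ K), c ≠ 0 ∧ (∀ i, (ℓ i).totalDegree = 1) ∧
      Polynomial.aeval H P = C c * ∏ i, ℓ i := by
  obtain ⟨r, hr⟩ := P.roots.exists_prod_map_eq_prod_fin
    (IsAlgClosed.card_roots_eq_natDegree.trans hPp) fun a => H - C a
  refine ⟨P.leadingCoeff, fun i => H - C (r i), Polynomial.leadingCoeff_ne_zero.2 hP,
    fun i => (totalDegree_sub_C_of_pos (hH ▸ one_pos) _).trans hH, ?_⟩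
  rw [(IsAlgClosed.splits P).aeval_eq_leadingCoeff_mul_prod_roots, algebraMap_eq, ← hr]

theorem prime_degree_decomposable_splits_general
    (K : Type) [Field K] (n : ℕ)
    (f : MvPolynomial (Fin n) K) (p : ℕ) (hp : p.Prime)
    (hdeg : f.totalDegree = p) (hdec : f.Decomposable) :
    (∃ (α : Polynomial K) (β : MvPolynomial (Fin n) K),
        α.natDegree = p ∧ β.totalDegree = 1 ∧ f = Polynomial.aeval β α) ∧
    (∃ (c : AlgebraicClosure (RatFunc K))
        (ℓ : Fin p → MvPolynomial (Fin n) (AlgebraicClosure (RatFunc K))),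
        c ≠ 0 ∧ (∀ i, (ℓ i).totalDegree = 1) ∧
        MvPolynomial.map (algebraMap K (AlgebraicClosure (RatFunc K))) f
            - MvPolynomial.C
                (algebraMap (RatFunc K) (AlgebraicClosure (RatFunc K)) RatFunc.X)
          = MvPolynomial.C c * ∏ i, ℓ i) := by
  obtain ⟨g, h, hg, rfl⟩ := hdec
  rw [totalDegree_aeval] at hdeg
  obtain ⟨hgp, hh⟩ : g.natDegree = p ∧ h.totalDegree = 1 := by
    rcases Nat.prime_mul_iff.1 (hdeg ▸ hp) with ⟨-, hh⟩ | ⟨-, hg1⟩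
    · exact ⟨by rwa [hh, mul_one] at hdeg, hh⟩
    · omega
  refine ⟨⟨g, h, hgp, hh, rfl⟩, ?_⟩
  set ι := algebraMap K (AlgebraicClosure (RatFunc K))
  set t := algebraMap (RatFunc K) (AlgebraicClosure (RatFunc K)) RatFunc.X
  have hP : (g.map ι - Polynomial.C t).natDegree = p := by
    rw [Polynomial.natDegree_sub_C, Polynomial.natDegree_map, hgp]
  have hP0 : g.map ι - Polynomial.C t ≠ 0 := by
    rintro h0
    rw [h0, Polynomial.natDegree_zero] at hP
    exact hp.ne_zero hP.symm
  have hcomp : map ι (Polynomial.aeval h g) - C t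
      = Polynomial.aeval (map ι h) (g.map ι - Polynomial.C t) := by
    rw [Polynomial.map_aeval_eq_aeval_map (map_comp_C ι).symm, map_sub, Polynomial.aeval_C,
      algebraMap_eq]
  rw [hcomp]
  exact exists_aeval_eq_C_mul_prod_of_totalDegree_eq_one hP0 hP
    ((totalDegree_map_of_injective ι.injective h).trans hh)

/-- **Decomposable polynomials of prime degree split into linear pieces.**
Let `K` be an algebraically closed field and let `f ∈ K[x₁,…,xₙ]` be a non-constant
polynomial whose total degree `p` is prime. If `f` is decomposable over `K`, then
`f = α(β)` for some univariate `α ∈ K[z]` of degree `p` and some `β ∈ K[x₁,…,xₙ]` of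
total degree `1`; consequently, over an algebraic closure `Ω` of `K(t)`, the polynomial
`f − t` factors as `c·ℓ₁⋯ℓ_p` with `c ∈ Ω` nonzero and each `ℓᵢ ∈ Ω[x₁,…,xₙ]` of total
degree `1`. -/
theorem prime_degree_decomposable_splits
    (K : Type) [Field K] [IsAlgClosed K] (n : ℕ) (hn : 1 ≤ n)
    (f : MvPolynomial (Fin n) K) (p : ℕ) (hp : p.Prime)
    (hdeg : f.totalDegree = p) (hdec : f.Decomposable) :
    (∃ (α : Polynomial K) (β : MvPolynomial (Fin n) K),
        α.natDegree = p ∧ β.totalDegree = 1 ∧ f = Polynomial.aeval β α) ∧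
    (∃ (c : AlgebraicClosure (RatFunc K))
        (ℓ : Fin p → MvPolynomial (Fin n) (AlgebraicClosure (RatFunc K))),
        c ≠ 0 ∧ (∀ i, (ℓ i).totalDegree = 1) ∧
        MvPolynomial.map (algebraMap K (AlgebraicClosure (RatFunc K))) f
            - MvPolynomial.C
                (algebraMap (RatFunc K) (AlgebraicClosure (RatFunc K)) RatFunc.X)
          = MvPolynomial.C c * ∏ i, ℓ i) :=
  prime_degree_decomposable_splits_general K n f p hp hdeg hdec
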